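/- Let α > 0 and λ > 0, and define the gamma hazard function h₀(x) = α·(αx)^(λ−1)·e^(−αx) / Γ(λ, αx) for x > 0, where Γ(λ,z) = ∫_z^∞ t^(λ−1)·e^(−t) dt is the upper incomplete gamma function; for τ > 0 define r(x,τ) = τ·h₀(τx)/h₀(x). Then for τ > 0: (0 ≤ r(x,τ) ≤ 1 for all x > 0) if and only if τ ≤ 1. -/

import Mathlib

open MeasureTheory

/-- The upper incomplete gamma function `Γ(λ, z) = ∫_z^∞ t^(λ−1)·e^(−t) dt`. -/
noncomputable def upperIncGamma (l z : ℝ) : ℝ :=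
  ∫ t in Set.Ioi z, t ^ (l - 1) * Real.exp (-t)

/-- The gamma hazard function `h₀(x) = α·(αx)^(λ−1)·e^(−αx)/Γ(λ, αx)`. -/
noncomputable def gammaHazard (α l x : ℝ) : ℝ :=
  α * (α * x) ^ (l - 1) * Real.exp (-(α * x)) / upperIncGamma l (α * x)

/-!
Substituting `t = z u` gives `Γ(λ, z) = z^λ e^(-z) K(z)` with
`K(z) = scaledUpperIncGamma λ z = ∫₁^∞ u^(λ-1) e^(-z(u-1)) du`, which is positive and
strictly decreasing in `z` because its integrand is. Hence `φ(x) = x h₀(x) = 1 / K(αx)` is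
positive and strictly increasing, and `r(x, τ) = φ(τx) / φ(x) ≤ 1` exactly when `τx ≤ x`.
-/

open Set Real

lemma setIntegral_pos_of_forall_pos {X : Type*} [MeasurableSpace X] {μ : Measure X} {s : Set X}
    {f : X → ℝ} (hs : MeasurableSet s) (hμ : 0 < μ s) (hf : IntegrableOn f s μ)
    (hpos : ∀ x ∈ s, 0 < f x) : 0 < ∫ x in s, f x ∂μ := by
  rw [setIntegral_pos_iff_support_of_nonneg_ae
    ((ae_restrict_iff' hs).2 (.of_forall fun x hx => (hpos x hx).le)) hf]
  exact hμ.trans_le <| measure_mono fun x hx => ⟨(hpos x hx).ne', hx⟩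

noncomputable def scaledUpperIncGamma (l z : ℝ) : ℝ :=
  ∫ u in Ioi (1 : ℝ), u ^ (l - 1) * exp (-(z * (u - 1)))

lemma rpow_mul_exp_neg_eq {l z u : ℝ} (hz : 0 < z) (hu : 0 < u) :
    (z * u) ^ (l - 1) * exp (-(z * u)) =
      z ^ (l - 1) * exp (-z) * (u ^ (l - 1) * exp (-(z * (u - 1)))) := by
  rw [mul_rpow hz.le hu.le, show -(z * u) = -z + -(z * (u - 1)) by ring, exp_add]
  ring

lemma integrableOn_rpow_mul_exp_neg_comp_mul {l z : ℝ} (hl : 0 < l) (hz : 0 < z) :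
    IntegrableOn (fun u : ℝ => (z * u) ^ (l - 1) * exp (-(z * u))) (Ioi 1) := by
  have hΓ : IntegrableOn (fun t : ℝ => t ^ (l - 1) * exp (-t)) (Ioi (z * 1)) := by
    simpa only [mul_comm, mul_one] using
      (GammaIntegral_convergent hl).mono_set (Ioi_subset_Ioi (mul_one z ▸ hz.le))
  exact (integrableOn_Ioi_comp_mul_left_iff _ 1 hz).2 hΓ

lemma integrableOn_scaledUpperIncGamma_integrand {l z : ℝ} (hl : 0 < l) (hz : 0 < z) :
    IntegrableOn (fun u : ℝ => u ^ (l - 1) * exp (-(z * (u - 1)))) (Ioi 1) := by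
  have hc : z ^ (l - 1) * exp (-z) ≠ 0 := by positivity
  refine IntegrableOn.congr_fun ((integrableOn_rpow_mul_exp_neg_comp_mul hl hz).const_mul
    (z ^ (l - 1) * exp (-z))⁻¹) (fun u hu => ?_) measurableSet_Ioi
  rw [rpow_mul_exp_neg_eq hz (zero_lt_one.trans hu), inv_mul_cancel_left₀ hc]

lemma upperIncGamma_eq_rpow_mul_exp_mul {l z : ℝ} (hz : 0 < z) :
    upperIncGamma l z = z ^ l * exp (-z) * scaledUpperIncGamma l z := by
  have hsub := integral_comp_mul_left_Ioi' (fun t : ℝ => t ^ (l - 1) * exp (-t)) 1 hz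
  rw [mul_one] at hsub
  rw [upperIncGamma, ← hsub, scaledUpperIncGamma, smul_eq_mul,
    setIntegral_congr_fun measurableSet_Ioi
      fun u hu => rpow_mul_exp_neg_eq hz (zero_lt_one.trans hu),
    integral_const_mul, rpow_sub_one hz.ne']
  field_simp

lemma scaledUpperIncGamma_pos {l z : ℝ} (hl : 0 < l) (hz : 0 < z) :
    0 < scaledUpperIncGamma l z :=
  setIntegral_pos_of_forall_pos measurableSet_Ioi (by simp)
    (integrableOn_scaledUpperIncGamma_integrand hl hz)
    fun u hu => by have : 0 < u := zero_lt_one.trans hu; positivity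

lemma scaledUpperIncGamma_strictAntiOn {l : ℝ} (hl : 0 < l) :
    StrictAntiOn (scaledUpperIncGamma l) (Ioi 0) := by
  intro z₁ hz₁ z₂ hz₂ hlt
  have hi₁ := integrableOn_scaledUpperIncGamma_integrand hl hz₁
  have hi₂ := integrableOn_scaledUpperIncGamma_integrand hl hz₂
  rw [← sub_pos, scaledUpperIncGamma, scaledUpperIncGamma, ← integral_sub hi₁ hi₂]
  refine setIntegral_pos_of_forall_pos measurableSet_Ioi (by simp) (hi₁.sub hi₂) fun u hu => ?_
  have hu : 1 < u := hu
  have hexp : exp (-(z₂ * (u - 1))) < exp (-(z₁ * (u - 1))) :=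
    exp_lt_exp.2 (neg_lt_neg (mul_lt_mul_of_pos_right hlt (sub_pos.2 hu)))
  have : 0 < u ^ (l - 1) := rpow_pos_of_pos (zero_lt_one.trans hu) _
  simpa only [sub_pos] using mul_lt_mul_of_pos_left hexp this

lemma mul_gammaHazard_eq {α l x : ℝ} (hα : 0 < α) (hl : 0 < l) (hx : 0 < x) :
    x * gammaHazard α l x = (scaledUpperIncGamma l (α * x))⁻¹ := by
  have hz : 0 < α * x := mul_pos hα hx
  have := scaledUpperIncGamma_pos hl hz
  rw [gammaHazard, upperIncGamma_eq_rpow_mul_exp_mul hz, rpow_sub_one hz.ne']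
  field_simp

lemma strictMonoOn_mul_gammaHazard {α l : ℝ} (hα : 0 < α) (hl : 0 < l) :
    StrictMonoOn (fun x => x * gammaHazard α l x) (Ioi 0) := by
  intro x hx y hy hxy
  simp only [mul_gammaHazard_eq hα hl hx, mul_gammaHazard_eq hα hl hy]
  have hαy : 0 < α * y := mul_pos hα hy
  exact inv_strictAnti₀ (scaledUpperIncGamma_pos hl hαy)
    (scaledUpperIncGamma_strictAntiOn hl (mul_pos hα hx) hαy (mul_lt_mul_of_pos_left hxy hα))

lemma ratio_le_one_iff_of_strictMonoOn {h : ℝ → ℝ} (hpos : ∀ x > 0, 0 < x * h x)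
    (hmono : StrictMonoOn (fun x => x * h x) (Ioi 0)) {τ : ℝ} (hτ : 0 < τ) :
    (∀ x > (0 : ℝ), 0 ≤ τ * h (τ * x) / h x ∧ τ * h (τ * x) / h x ≤ 1) ↔
      τ ≤ 1 := by
  have key : ∀ x > (0 : ℝ),
      (0 ≤ τ * h (τ * x) / h x ∧ τ * h (τ * x) / h x ≤ 1) ↔ τ ≤ 1 := by
    intro x hx
    have hτx : 0 < τ * x := mul_pos hτ hx
    have hφx := hpos x hx
    have hφτx := hpos _ hτx
    have hr : τ * h (τ * x) / h x = (τ * x) * h (τ * x) / (x * h x) := by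
      rw [mul_right_comm τ x, mul_comm x (h x), mul_div_mul_right _ _ hx.ne']
    rw [hr, div_le_one hφx, hmono.le_iff_le hτx hx, mul_le_iff_le_one_left hx]
    exact and_iff_right (div_pos hφτx hφx).le
  exact ⟨fun H => (key 1 one_pos).1 (H 1 one_pos), fun H x hx => (key x hx).2 H⟩

theorem gamma_r_le_one_iff (α l τ : ℝ) (hα : 0 < α) (hl : 0 < l) (hτ : 0 < τ) :
    (∀ x > (0:ℝ),
        0 ≤ τ * gammaHazard α l (τ * x) / gammaHazard α l x ∧
        τ * gammaHazard α l (τ * x) / gammaHazard α l x ≤ 1) ↔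
      τ ≤ 1 := by
  refine ratio_le_one_iff_of_strictMonoOn (fun x hx => ?_)
    (strictMonoOn_mul_gammaHazard hα hl) hτ
  rw [mul_gammaHazard_eq hα hl hx]
  exact inv_pos.2 (scaledUpperIncGamma_pos hl (mul_pos hα hx))
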